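/- For every n ≥ 3, the function f : ℝ^n → ℝ defined by f(x) = max{0, x_1, x_2, …, x_{n-3}, max{x_{n-2}, x_{n-1}} + max{0, x_n}} is not contained in MAX_n(n); that is, f cannot be written as a finite linear combination of maxima of at most n affine functions. In particular, MAX_n(n) is a strict subset of CPWL_n. -/

import Mathlib

/-!
Along a ray `y + t • c`, a maximum of finitely many affine maps is eventually `t` times its
largest slope in direction `c` plus the maximum of its *top face*, the pieces of largest slope.
Comparing both sides of `∑ λᵢ • max Sᵢ = max T` along such rays for large `t` shows that the
top faces in the directions `c` and `-c` satisfy the same relation. For each `Sᵢ` with at most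
`m` pieces, either all slopes in direction `c` coincide, and the two faces of `Sᵢ` cancel, or
the two faces are disjoint, and each has at most `m - 1` pieces. Hence, if `max T ∈ MAX(m)`,
then `max (bottom face) - max (top face) ∈ MAX(m - 1)`.

In direction `e_k`, the top face of `max(0, x₁, …, x_k)` is `x_k` and its bottom face is
`max(0, x₁, …, x_{k-1})`, so by induction `max(0, x₁, …, x_k) ∉ MAX(k)`; for `k = 1` the faces
`0` and `x₁` would differ by an element of `MAX(0) = {0}`. In direction `eₙ`, the
top face of `f` has two pieces and its bottom face is `max(0, x₁, …, x_{n-1}) ∉ MAX(n - 1)`, so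
`f ∉ MAX(n)`. A linear combination of maxima is affine on each polyhedral cell on which a fixed
piece of every maximum is active, so it is CPWL.
-/

/-- A polyhedron: a finite intersection of closed halfspaces. -/
def IsPolyhedron {n : ℕ} (P : Set (Fin n → ℝ)) : Prop :=
  ∃ (m : ℕ) (A : Fin m → Fin n → ℝ) (b : Fin m → ℝ),
    P = {x | ∀ i, ∑ j, A i j * x j ≤ b i}

/-- `f ∈ CPWL_n`: `f` is continuous and there are finitely many polyhedra covering `ℝⁿ`
such that `f` is affine on each of them. -/
def IsCPWL {n : ℕ} (f : (Fin n → ℝ) → ℝ) : Prop :=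
  Continuous f ∧ ∃ (N : ℕ) (P : Fin N → Set (Fin n → ℝ)),
    (∀ i, IsPolyhedron (P i)) ∧ (⋃ i, P i) = Set.univ ∧
    ∀ i, ∃ (a : Fin n → ℝ) (c : ℝ), ∀ x ∈ P i, f x = (∑ j, a j * x j) + c

/-- Maximum of `v` over a finite set `S` (junk value `0` if `S = ∅`). -/
noncomputable def maxOverSet {ι : Type*} (S : Finset ι) (v : ι → ℝ) : ℝ :=
  if h : S.Nonempty then S.sup' h v else 0

/-- `f ∈ MAX_n(p)`: `f` is a finite linear combination of maxima of (at most) `p`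
affine functions. -/
def InMAX (n p : ℕ) (f : (Fin n → ℝ) → ℝ) : Prop :=
  ∃ (N : ℕ) (lam : Fin N → ℝ) (a : Fin N → Fin p → Fin n → ℝ) (b : Fin N → Fin p → ℝ),
    ∀ x, f x = ∑ j, lam j * maxOverSet Finset.univ (fun i => (∑ t, a j i t * x t) + b j i)

open Finset Filter

lemma le_maxOverSet {ι : Type*} {s : Finset ι} {v : ι → ℝ} {i : ι} (hi : i ∈ s) :
    v i ≤ maxOverSet s v := by
  rw [maxOverSet, dif_pos ⟨i, hi⟩]
  exact le_sup' v hi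

lemma maxOverSet_le {ι : Type*} {s : Finset ι} {v : ι → ℝ} {a : ℝ} (h : ∀ i ∈ s, v i ≤ a)
    (ha : 0 ≤ a) : maxOverSet s v ≤ a := by
  rw [maxOverSet]
  split_ifs with hs
  exacts [sup'_le hs v h, ha]

section MaxAffine

open scoped Classical

variable {E : Type*} [AddCommGroup E] [Module ℝ E]

noncomputable def maxAffine (S : Finset (E →ᵃ[ℝ] ℝ)) (x : E) : ℝ :=
  maxOverSet S (fun φ => φ x)

-- `topFace S (-c)` is the face of smallest slope in direction `c`.
noncomputable def topFace (S : Finset (E →ᵃ[ℝ] ℝ)) (c : E) : Finset (E →ᵃ[ℝ] ℝ) :=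
  S.filter fun φ => ∀ ψ ∈ S, ψ.linear c ≤ φ.linear c

-- `MAX(p)` for functions on `E`
variable (E) in
noncomputable def maxAffineSpan (p : ℕ) : Submodule ℝ (E → ℝ) :=
  Submodule.span ℝ (maxAffine '' {S | S.Nonempty ∧ S.card ≤ p})

variable {S T U : Finset (E →ᵃ[ℝ] ℝ)} {φ : E →ᵃ[ℝ] ℝ} {c x : E}

lemma maxAffine_eq_sup' (hS : S.Nonempty) (x : E) : maxAffine S x = S.sup' hS (· x) :=
  dif_pos hS

lemma le_maxAffine (hφ : φ ∈ S) (x : E) : φ x ≤ maxAffine S x :=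
  le_maxOverSet (v := (· x)) hφ

lemma maxAffine_le {a : ℝ} (hS : S.Nonempty) (h : ∀ φ ∈ S, φ x ≤ a) : maxAffine S x ≤ a := by
  rw [maxAffine_eq_sup' hS]
  exact sup'_le hS _ h

lemma maxAffine_singleton : maxAffine {φ} = φ := by
  ext x
  rw [maxAffine_eq_sup' (singleton_nonempty φ), sup'_singleton]

lemma AffineMap.apply_add_smul (φ : E →ᵃ[ℝ] ℝ) (y c : E) (t : ℝ) :
    φ (y + t • c) = φ y + t * φ.linear c := by
  rw [φ.decomp]
  simp only [Pi.add_apply, map_add, map_smul, smul_eq_mul]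
  ring

lemma AffineMap.coe_finsetSum {ι : Type*} (s : Finset ι) (f : ι → E →ᵃ[ℝ] ℝ) :
    ⇑(∑ i ∈ s, f i) = ∑ i ∈ s, ⇑(f i) :=
  map_sum (AddMonoidHom.mk' (fun φ : E →ᵃ[ℝ] ℝ => (φ : E → ℝ)) AffineMap.coe_add) f s

lemma mem_topFace : φ ∈ topFace S c ↔ φ ∈ S ∧ ∀ ψ ∈ S, ψ.linear c ≤ φ.linear c :=
  mem_filter

lemma topFace_subset (S : Finset (E →ᵃ[ℝ] ℝ)) (c : E) : topFace S c ⊆ S :=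
  filter_subset _ _

lemma topFace_nonempty (hS : S.Nonempty) (c : E) : (topFace S c).Nonempty := by
  obtain ⟨φ, hφ, hmax⟩ := S.exists_max_image (fun φ => φ.linear c) hS
  exact ⟨φ, mem_topFace.2 ⟨hφ, hmax⟩⟩

lemma exists_eventually_maxAffine_add_smul (hS : S.Nonempty) (c y : E) :
    ∃ s : ℝ, ∀ᶠ t in atTop, maxAffine S (y + t • c) = t * s + maxAffine (topFace S c) y := by
  obtain ⟨φ₀, hφ₀S, hφ₀max⟩ := S.exists_max_image (fun φ => φ.linear c) hS
  have hφ₀ : φ₀ ∈ topFace S c := mem_topFace.2 ⟨hφ₀S, hφ₀max⟩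
  refine ⟨φ₀.linear c, ?_⟩
  have hle : ∀ φ ∈ S, ∀ᶠ t in atTop,
      φ (y + t • c) ≤ t * φ₀.linear c + maxAffine (topFace S c) y := by
    intro φ hφ
    simp only [φ.apply_add_smul]
    rcases (hφ₀max φ hφ).lt_or_eq with hlt | heq
    · filter_upwards [(tendsto_id.const_mul_atTop (sub_pos.2 hlt)).eventually_ge_atTop
        (φ y - φ₀ y)] with t ht
      have := le_maxAffine hφ₀ y
      simp only [id] at ht
      linarith
    · have hφtop : φ ∈ topFace S c :=
        mem_topFace.2 ⟨hφ, fun ψ hψ => heq ▸ hφ₀max ψ hψ⟩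
      refine Eventually.of_forall fun t => ?_
      have := le_maxAffine hφtop y
      rw [heq]
      linarith
  filter_upwards [(eventually_all_finset S).2 hle] with t ht
  refine le_antisymm (maxAffine_le hS ht) ?_
  suffices maxAffine (topFace S c) y ≤ maxAffine S (y + t • c) - t * φ₀.linear c by linarith
  refine maxAffine_le (topFace_nonempty hS c) fun φ hφ => ?_
  have hslope : φ.linear c = φ₀.linear c :=
    le_antisymm (hφ₀max φ (topFace_subset S c hφ)) ((mem_topFace.1 hφ).2 φ₀ hφ₀S)
  have := le_maxAffine (topFace_subset S c hφ) (y + t • c)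
  rw [φ.apply_add_smul, hslope] at this
  linarith

lemma eq_of_eventually_mul_add_eq {a b a' b' : ℝ}
    (h : ∀ᶠ t in atTop, t * a + b = t * a' + b') : b = b' := by
  obtain ⟨t₀, ht₀⟩ := eventually_atTop.1 h
  have h₁ := ht₀ t₀ le_rfl
  have h₂ := ht₀ (t₀ + 1) (by linarith)
  have ha : a = a' := by linear_combination h₂ - h₁
  rw [ha] at h₁
  linarith

theorem sum_smul_maxAffine_topFace {ι : Type*} [Fintype ι] {lam : ι → ℝ}
    {S : ι → Finset (E →ᵃ[ℝ] ℝ)} (hS : ∀ i, (S i).Nonempty) (hT : T.Nonempty)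
    (h : ∑ i, lam i • maxAffine (S i) = maxAffine T) (c : E) :
    ∑ i, lam i • maxAffine (topFace (S i) c) = maxAffine (topFace T c) := by
  ext y
  choose s hs using fun i => exists_eventually_maxAffine_add_smul (hS i) c y
  obtain ⟨s', hs'⟩ := exists_eventually_maxAffine_add_smul hT c y
  simp only [Finset.sum_apply, Pi.smul_apply, smul_eq_mul]
  refine eq_of_eventually_mul_add_eq (a := ∑ i, lam i * s i) (a' := s') ?_
  filter_upwards [eventually_all.2 hs, hs'] with t hSt hTt
  have := congrFun h (y + t • c)
  simp only [Finset.sum_apply, Pi.smul_apply, smul_eq_mul, hSt, hTt] at this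
  rw [← this, Finset.mul_sum, ← Finset.sum_add_distrib]
  exact Finset.sum_congr rfl fun i _ => by ring

lemma maxAffine_mem_maxAffineSpan {p : ℕ} (hS : S.Nonempty) (hp : S.card ≤ p) :
    maxAffine S ∈ maxAffineSpan E p :=
  Submodule.subset_span ⟨S, ⟨hS, hp⟩, rfl⟩

lemma maxAffineSpan_mono {p q : ℕ} (h : p ≤ q) : maxAffineSpan E p ≤ maxAffineSpan E q :=
  Submodule.span_mono <| Set.image_mono fun _ hS => ⟨hS.1, hS.2.trans h⟩

lemma maxAffineSpan_zero : maxAffineSpan E 0 = ⊥ := by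
  rw [maxAffineSpan, Submodule.span_eq_bot]
  rintro _ ⟨S, ⟨hS, hcard⟩, rfl⟩
  exact absurd (card_pos.2 hS) (by omega)

lemma exists_sum_smul_maxAffine_eq_of_mem {p : ℕ} {g : E → ℝ} (hg : g ∈ maxAffineSpan E p) :
    ∃ (N : ℕ) (lam : Fin N → ℝ) (S : Fin N → Finset (E →ᵃ[ℝ] ℝ)),
      (∀ i, (S i).Nonempty ∧ (S i).card ≤ p) ∧ ∑ i, lam i • maxAffine (S i) = g := by
  obtain ⟨N, lam, g, rfl⟩ := Submodule.mem_span_set'.1 hg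
  choose S hS hSg using fun i => (g i).2
  exact ⟨N, lam, S, hS, by simp only [hSg]⟩

lemma topFace_eq_self_and_topFace_neg_eq_self_or_disjoint (S : Finset (E →ᵃ[ℝ] ℝ)) (c : E) :
    (topFace S c = S ∧ topFace S (-c) = S) ∨ Disjoint (topFace S c) (topFace S (-c)) := by
  refine or_iff_not_imp_right.2 fun h => ?_
  obtain ⟨φ, hφc, hφnc⟩ := not_disjoint_iff.1 h
  -- `φ` has both the largest and the smallest slope in direction `c`
  have hslope : ∀ ψ ∈ S, ψ.linear c = φ.linear c := fun ψ hψ => by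
    have h₁ := (mem_topFace.1 hφc).2 ψ hψ
    have h₂ := (mem_topFace.1 hφnc).2 ψ hψ
    simp only [map_neg] at h₂
    linarith
  refine ⟨(filter_eq_self).2 fun ψ hψ χ hχ => ?_, (filter_eq_self).2 fun ψ hψ χ hχ => ?_⟩
  · rw [hslope ψ hψ, hslope χ hχ]
  · simp only [map_neg, hslope ψ hψ, hslope χ hχ, le_refl]

lemma maxAffine_topFace_neg_sub_maxAffine_topFace_mem_of_card_le {m : ℕ} (hS : S.Nonempty)
    (hm : S.card ≤ m) (c : E) :
    maxAffine (topFace S (-c)) - maxAffine (topFace S c) ∈ maxAffineSpan E (m - 1) := by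
  rcases topFace_eq_self_and_topFace_neg_eq_self_or_disjoint S c with ⟨h₁, h₂⟩ | hdisj
  · rw [h₁, h₂, sub_self]
    exact zero_mem _
  · have hcard : (topFace S c).card + (topFace S (-c)).card ≤ S.card := by
      rw [← card_union_of_disjoint hdisj]
      exact card_le_card (union_subset (topFace_subset S c) (topFace_subset S (-c)))
    have h₁ := card_pos.2 (topFace_nonempty hS c)
    have h₂ := card_pos.2 (topFace_nonempty hS (-c))
    exact sub_mem (maxAffine_mem_maxAffineSpan (topFace_nonempty hS (-c)) (by omega))
      (maxAffine_mem_maxAffineSpan (topFace_nonempty hS c) (by omega))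

theorem maxAffine_topFace_neg_sub_maxAffine_topFace_mem_of_mem {m : ℕ} (hT : T.Nonempty)
    (h : maxAffine T ∈ maxAffineSpan E m) (c : E) :
    maxAffine (topFace T (-c)) - maxAffine (topFace T c) ∈ maxAffineSpan E (m - 1) := by
  obtain ⟨N, lam, S, hS, hsum⟩ := exists_sum_smul_maxAffine_eq_of_mem h
  have hS' : ∀ i, (S i).Nonempty := fun i => (hS i).1
  rw [← sum_smul_maxAffine_topFace hS' hT hsum, ← sum_smul_maxAffine_topFace hS' hT hsum,
    ← sum_sub_distrib]
  refine Submodule.sum_mem _ fun i _ => ?_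
  rw [← smul_sub]
  exact Submodule.smul_mem _ _
    (maxAffine_topFace_neg_sub_maxAffine_topFace_mem_of_card_le (hS i).1 (hS i).2 c)

lemma topFace_union_eq_left {b : ℝ} (hU : U.Nonempty) (hUb : ∀ ψ ∈ U, ψ.linear c = b)
    (hS : ∀ ψ ∈ S, ψ.linear c < b) : topFace (U ∪ S) c = U := by
  ext ψ
  rw [mem_topFace, mem_union]
  constructor
  · rintro ⟨hψ | hψ, hmax⟩
    · exact hψ
    · obtain ⟨χ, hχ⟩ := hU
      have := hmax χ (mem_union_left _ hχ)
      linarith [hS ψ hψ, hUb χ hχ]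
  · intro hψ
    refine ⟨Or.inl hψ, fun χ hχ => ?_⟩
    rcases mem_union.1 hχ with hχ | hχ
    · rw [hUb χ hχ, hUb ψ hψ]
    · linarith [hS χ hχ, hUb ψ hψ]

theorem maxAffine_sub_maxAffine_mem_of_union_mem {a b : ℝ} {m : ℕ} (hU : U.Nonempty)
    (hS : S.Nonempty) (hUb : ∀ ψ ∈ U, ψ.linear c = b) (hSa : ∀ ψ ∈ S, ψ.linear c = a)
    (hab : a < b) (h : maxAffine (U ∪ S) ∈ maxAffineSpan E m) :
    maxAffine S - maxAffine U ∈ maxAffineSpan E (m - 1) := by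
  have htop : topFace (U ∪ S) c = U :=
    topFace_union_eq_left hU hUb fun ψ hψ => (hSa ψ hψ).trans_lt hab
  have hbot : topFace (U ∪ S) (-c) = S := by
    rw [union_comm]
    refine topFace_union_eq_left (b := -a) hS (fun ψ hψ => ?_) fun ψ hψ => ?_
    · rw [map_neg, hSa ψ hψ]
    · rw [map_neg, hUb ψ hψ]
      exact neg_lt_neg hab
  simpa only [htop, hbot] using
    maxAffine_topFace_neg_sub_maxAffine_topFace_mem_of_mem (hU.mono subset_union_left) h c

theorem maxAffine_mem_of_union_mem {a b : ℝ} {m : ℕ} (hU : U.Nonempty) (hS : S.Nonempty)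
    (hUb : ∀ ψ ∈ U, ψ.linear c = b) (hSa : ∀ ψ ∈ S, ψ.linear c = a) (hab : a < b)
    (h : maxAffine (U ∪ S) ∈ maxAffineSpan E m) :
    maxAffine S ∈ maxAffineSpan E (max (m - 1) U.card) := by
  simpa only [sub_add_cancel] using add_mem
    (maxAffineSpan_mono (le_max_left _ _)
      (maxAffine_sub_maxAffine_mem_of_union_mem hU hS hUb hSa hab h))
    (maxAffineSpan_mono (le_max_right _ _) (maxAffine_mem_maxAffineSpan hU le_rfl))

end MaxAffine

section Simplex

open scoped Classical

variable {E ι : Type*} [AddCommGroup E] [Module ℝ E] (φ : ι → E →ᵃ[ℝ] ℝ)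

noncomputable def simplexPieces (s : Finset ι) : Finset (E →ᵃ[ℝ] ℝ) :=
  insert 0 (s.image φ)

lemma simplexPieces_insert [DecidableEq ι] (j : ι) (s : Finset ι) :
    simplexPieces φ (insert j s) = {φ j} ∪ simplexPieces φ s := by
  rw [simplexPieces, simplexPieces, image_insert, insert_comm, ← insert_eq]

variable {φ} [DecidableEq ι] {e : ι → E} (he : ∀ i j, (φ i).linear (e j) = if i = j then 1 else 0)
include he

lemma linear_apply_eq_zero_of_mem_simplexPieces {s : Finset ι} {j : ι} (hj : j ∉ s)
    {ψ : E →ᵃ[ℝ] ℝ} (hψ : ψ ∈ simplexPieces φ s) : ψ.linear (e j) = 0 := by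
  rcases mem_insert.1 hψ with rfl | hψ
  · rfl
  · obtain ⟨i, hi, rfl⟩ := mem_image.1 hψ
    rw [he, if_neg (ne_of_mem_of_not_mem hi hj)]

theorem maxAffine_simplexPieces_not_mem {s : Finset ι} (hs : s.Nonempty) :
    maxAffine (simplexPieces φ s) ∉ maxAffineSpan E s.card := by
  have hslope : ∀ j, ∀ ψ ∈ ({φ j} : Finset (E →ᵃ[ℝ] ℝ)), ψ.linear (e j) = 1 := by
    intro j ψ hψ
    rw [mem_singleton.1 hψ, he, if_pos rfl]
  induction hs using Finset.Nonempty.cons_induction with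
  | singleton j =>
    intro h
    rw [card_singleton, ← insert_empty, simplexPieces_insert] at h
    have := maxAffine_sub_maxAffine_mem_of_union_mem (singleton_nonempty _)
      (insert_nonempty _ _) (hslope j)
      (fun ψ hψ => linear_apply_eq_zero_of_mem_simplexPieces he (notMem_empty j) hψ)
      zero_lt_one h
    -- `MAX(0) = {0}`, so the faces `{0}` and `{φ j}` would give the same function
    rw [Nat.sub_self, maxAffineSpan_zero, Submodule.mem_bot, sub_eq_zero] at this
    simp only [image_empty, insert_empty, maxAffine_singleton] at this
    have h₁ := (φ j).decomp
    rw [← this] at h₁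
    simpa [he] using congrFun h₁ (e j)
  | cons j s hj hs ih =>
    intro h
    rw [card_cons, cons_eq_insert, simplexPieces_insert] at h
    have := maxAffine_mem_of_union_mem (singleton_nonempty _) (insert_nonempty _ _)
      (hslope j) (fun ψ hψ => linear_apply_eq_zero_of_mem_simplexPieces he hj hψ) zero_lt_one h
    rw [card_singleton, Nat.add_sub_cancel, max_eq_left (card_pos.2 hs)] at this
    exact ih this

end Simplex

section Coordinates

variable {n : ℕ}

def coord (i : Fin n) : (Fin n → ℝ) →ᵃ[ℝ] ℝ :=
  (LinearMap.proj i).toAffineMap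

@[simp] lemma coord_apply (i : Fin n) (x : Fin n → ℝ) : coord i x = x i := rfl

lemma coord_linear_single (i j : Fin n) :
    (coord i).linear (Pi.single j 1) = if i = j then 1 else 0 := by
  simp [coord, Pi.single_apply]

noncomputable def affineOfCoeffs (a : Fin n → ℝ) (b : ℝ) : (Fin n → ℝ) →ᵃ[ℝ] ℝ :=
  ∑ t, a t • coord t + AffineMap.const ℝ _ b

@[simp] lemma affineOfCoeffs_apply (a : Fin n → ℝ) (b : ℝ) (x : Fin n → ℝ) :
    affineOfCoeffs a b x = ∑ t, a t * x t + b := by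
  simp [affineOfCoeffs, AffineMap.coe_finsetSum]

lemma InMAX.mem_maxAffineSpan {p : ℕ} (hp : 0 < p) {g : (Fin n → ℝ) → ℝ} (hg : InMAX n p g) :
    g ∈ maxAffineSpan (Fin n → ℝ) p := by
  classical
  obtain ⟨N, lam, a, b, hg⟩ := hg
  have hne : (univ : Finset (Fin p)).Nonempty := univ_nonempty_iff.2 ⟨⟨0, hp⟩⟩
  have hS : ∀ j, (univ.image fun i => affineOfCoeffs (a j i) (b j i)).Nonempty :=
    fun j => hne.image _
  have hg' : g = ∑ j, lam j • maxAffine (univ.image fun i => affineOfCoeffs (a j i) (b j i)) := by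
    ext x
    rw [hg x, Finset.sum_apply]
    refine Finset.sum_congr rfl fun j _ => ?_
    rw [Pi.smul_apply, smul_eq_mul, maxAffine_eq_sup' (hS j), sup'_image, maxOverSet, dif_pos hne]
    simp
  rw [hg']
  exact Submodule.sum_mem _ fun j _ => Submodule.smul_mem _ _ <|
    maxAffine_mem_maxAffineSpan (hS j) (card_image_le.trans (by simp))

end Coordinates

section Witness

open scoped Classical

variable {n : ℕ}

noncomputable def witnessPieces (a b c : Fin n) : Finset ((Fin n → ℝ) →ᵃ[ℝ] ℝ) :=
  {coord a + coord c, coord b + coord c} ∪ simplexPieces coord (univ.erase c)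

theorem maxAffine_witnessPieces_not_mem {a b c : Fin n} (hac : a ≠ c) (hbc : b ≠ c)
    (hn : 3 ≤ n) : maxAffine (witnessPieces a b c) ∉ maxAffineSpan (Fin n → ℝ) n := by
  intro h
  have hcard : (univ.erase c).card = n - 1 := by
    rw [card_erase_of_mem (mem_univ c), card_univ, Fintype.card_fin]
  have hslope : ∀ ψ ∈ ({coord a + coord c, coord b + coord c} : Finset _),
      ψ.linear (Pi.single c 1) = 1 := by
    intro ψ hψ
    rcases mem_insert.1 hψ with rfl | hψ
    · simp [coord_linear_single, hac]
    · rw [mem_singleton.1 hψ]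
      simp [coord_linear_single, hbc]
  have := maxAffine_mem_of_union_mem (insert_nonempty _ _) (insert_nonempty _ _) hslope
    (fun ψ hψ => linear_apply_eq_zero_of_mem_simplexPieces (e := (Pi.single · 1))
      coord_linear_single (notMem_erase c univ) hψ) zero_lt_one h
  have hU := card_le_two (a := coord a + coord c) (b := coord b + coord c)
  refine maxAffine_simplexPieces_not_mem (e := (Pi.single · 1)) coord_linear_single
    ⟨a, mem_erase.2 ⟨hac, mem_univ a⟩⟩ (hcard ▸ maxAffineSpan_mono ?_ this)
  omega

lemma maxAffine_witnessPieces_apply {a b c : Fin n} {s : Finset (Fin n)}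
    (hs : ∀ i, i ≠ c ↔ i ∈ s ∨ i = a ∨ i = b) (x : Fin n → ℝ) :
    maxAffine (witnessPieces a b c) x =
      max 0 (max (maxOverSet s fun i => x i) (max (x a) (x b) + max 0 (x c))) := by
  have hmem : ∀ ψ, ψ ∈ witnessPieces a b c ↔ ψ = 0 ∨ ψ = coord a + coord c ∨
      ψ = coord b + coord c ∨ ∃ i, (i ∈ s ∨ i = a ∨ i = b) ∧ coord i = ψ := by
    simp [witnessPieces, simplexPieces, ← hs]
  have hxc : 0 ≤ max 0 (x c) := le_max_left _ _
  apply le_antisymm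
  · refine maxAffine_le (by simp [witnessPieces]) fun ψ hψ => ?_
    rcases (hmem ψ).1 hψ with rfl | rfl | rfl | ⟨i, hi | rfl | rfl, rfl⟩
    · exact le_max_left _ _
    · exact le_max_of_le_right <| le_max_of_le_right <|
        add_le_add (le_max_left _ _) (le_max_right _ _)
    · exact le_max_of_le_right <| le_max_of_le_right <|
        add_le_add (le_max_right _ _) (le_max_right _ _)
    · exact le_max_of_le_right <| le_max_of_le_left <| le_maxOverSet hi
    · exact le_max_of_le_right <| le_max_of_le_right <| by
        linarith [coord_apply i x, le_max_left (x i) (x b)]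
    · exact le_max_of_le_right <| le_max_of_le_right <| by
        linarith [coord_apply i x, le_max_right (x a) (x i)]
  · have hle : ∀ ψ : (Fin n → ℝ) →ᵃ[ℝ] ℝ, _ → ψ x ≤ maxAffine (witnessPieces a b c) x :=
      fun ψ hψ => le_maxAffine ((hmem ψ).2 hψ) x
    have h₀ : 0 ≤ maxAffine (witnessPieces a b c) x := by simpa using hle 0 (Or.inl rfl)
    refine max_le h₀ (max_le (maxOverSet_le (fun i hi => ?_) h₀) ?_)
    · simpa using hle (coord i) (Or.inr (Or.inr (Or.inr ⟨i, Or.inl hi, rfl⟩)))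
    rw [max_add, add_max, add_max, add_zero, add_zero]
    refine max_le (max_le ?_ ?_) (max_le ?_ ?_)
    · simpa using hle (coord a) (Or.inr (Or.inr (Or.inr ⟨a, Or.inr (Or.inl rfl), rfl⟩)))
    · simpa using hle _ (Or.inr (Or.inl rfl))
    · simpa using hle (coord b) (Or.inr (Or.inr (Or.inr ⟨b, Or.inr (Or.inr rfl), rfl⟩)))
    · simpa using hle _ (Or.inr (Or.inr (Or.inl rfl)))

end Witness

section CPWL

variable {n : ℕ}

lemma AffineMap.apply_eq_sum_mul_add (φ : (Fin n → ℝ) →ᵃ[ℝ] ℝ) (x : Fin n → ℝ) :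
    φ x = ∑ j, φ.linear (Pi.single j 1) * x j + φ 0 := by
  conv_lhs => rw [φ.decomp, Pi.add_apply, ← Finset.univ_sum_single x, map_sum]
  congr 1
  refine Finset.sum_congr rfl fun j _ => ?_
  rw [mul_comm, ← smul_eq_mul, ← map_smul, ← Pi.single_smul, smul_eq_mul, mul_one]

lemma continuous_maxAffine {E : Type*} [NormedAddCommGroup E] [NormedSpace ℝ E]
    [FiniteDimensional ℝ E] (S : Finset (E →ᵃ[ℝ] ℝ)) : Continuous (maxAffine S) := by
  rcases S.eq_empty_or_nonempty with rfl | hS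
  · have : maxAffine (∅ : Finset (E →ᵃ[ℝ] ℝ)) = fun _ => 0 :=
      funext fun _ => by simp [maxAffine, maxOverSet]
    rw [this]
    exact continuous_const
  · simp only [funext (maxAffine_eq_sup' hS)]
    exact Continuous.finset_sup'_apply hS fun φ _ =>
      AffineMap.continuous_linear_iff.1 φ.linear.continuous_of_finiteDimensional

lemma isPolyhedron_setOf_forall_nonpos {ι : Type*} [Fintype ι]
    (φ : ι → (Fin n → ℝ) →ᵃ[ℝ] ℝ) : IsPolyhedron {x | ∀ i, φ i x ≤ 0} := by
  let e := Fintype.equivFin ι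
  refine ⟨Fintype.card ι, fun k j => (φ (e.symm k)).linear (Pi.single j 1),
    fun k => -φ (e.symm k) 0, ?_⟩
  ext x
  simp only [Set.mem_ofPred_eq, e.forall_congr_left, (φ _).apply_eq_sum_mul_add x]
  exact forall_congr' fun k => by constructor <;> intro h <;> linarith

lemma IsCPWL.of_cover {ι : Type*} [Fintype ι] {f : (Fin n → ℝ) → ℝ} (hf : Continuous f)
    (P : ι → Set (Fin n → ℝ)) (hP : ∀ i, IsPolyhedron (P i)) (hcover : ⋃ i, P i = Set.univ)
    (haff : ∀ i, ∃ φ : (Fin n → ℝ) →ᵃ[ℝ] ℝ, Set.EqOn f φ (P i)) : IsCPWL f := by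
  let e := Fintype.equivFin ι
  refine ⟨hf, Fintype.card ι, P ∘ e.symm, fun k => hP _, ?_, fun k => ?_⟩
  · change ⋃ k, P (e.symm k) = _
    rwa [e.symm.surjective.iUnion_comp P]
  · obtain ⟨φ, hφ⟩ := haff (e.symm k)
    exact ⟨_, _, fun x hx => (hφ hx).trans (φ.apply_eq_sum_mul_add x)⟩

theorem isCPWL_sum_smul_maxAffine {ι : Type*} [Fintype ι] (lam : ι → ℝ)
    {S : ι → Finset ((Fin n → ℝ) →ᵃ[ℝ] ℝ)} (hS : ∀ i, (S i).Nonempty) :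
    IsCPWL (∑ i, lam i • maxAffine (S i)) := by
  classical
  -- one cell for each choice `σ` of an active piece in every term
  refine IsCPWL.of_cover (ι := (i : ι) → S i) ?_
    (fun σ => {x | ∀ p : (i : ι) × S i, (p.2.1 - (σ p.1).1) x ≤ 0})
    (fun σ => isPolyhedron_setOf_forall_nonpos _) ?_ fun σ => ⟨∑ i, lam i • (σ i).1, ?_⟩
  · rw [Finset.sum_fn]
    exact continuous_finsetSum _ fun i _ => (continuous_maxAffine _).const_smul _
  · refine Set.eq_univ_of_forall fun x => Set.mem_iUnion.2 ?_
    choose σ hσ hmax using fun i => (S i).exists_max_image (fun φ => φ x) (hS i)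
    exact ⟨fun i => ⟨σ i, hσ i⟩, fun p => by simpa using hmax p.1 p.2 p.2.2⟩
  · intro x hx
    have hσ : ∀ i, maxAffine (S i) x = (σ i).1 x := fun i =>
      le_antisymm (maxAffine_le (hS i) fun ψ hψ => by simpa using hx ⟨i, ψ, hψ⟩)
        (le_maxAffine (σ i).2 x)
    simp [AffineMap.coe_finsetSum, hσ]

theorem isCPWL_of_mem_maxAffineSpan {p : ℕ} {g : (Fin n → ℝ) → ℝ}
    (hg : g ∈ maxAffineSpan (Fin n → ℝ) p) : IsCPWL g := by
  obtain ⟨N, lam, S, hS, rfl⟩ := exists_sum_smul_maxAffine_eq_of_mem hg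
  exact isCPWL_sum_smul_maxAffine lam fun i => (hS i).1

end CPWL

-- Coordinates are 0-indexed: `x_i` of the paper is `x ⟨i - 1, _⟩`.
/-- for every `n ≥ 3`, the function
`f(x) = max{0, x₁, …, x_{n−3}, max{x_{n−2}, x_{n−1}} + max{0, xₙ}}` is not contained in
`MAX_n(n)`; in particular `MAX_n(n)` is a strict subset of `CPWL_n`.
(Coordinates are 0-indexed: `x_i` of the paper is `x ⟨i-1⟩`.) -/
theorem not_in_max_n (n : ℕ) (hn : 3 ≤ n) (f : (Fin n → ℝ) → ℝ)
    (hf : ∀ x, f x =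
      max 0 (max
        (maxOverSet (Finset.univ.filter (fun i : Fin n => (i : ℕ) < n - 3)) (fun i => x i))
        (max (x ⟨n - 3, by omega⟩) (x ⟨n - 2, by omega⟩) + max 0 (x ⟨n - 1, by omega⟩)))) :
    ¬ InMAX n n f ∧ IsCPWL f ∧ ∀ g : (Fin n → ℝ) → ℝ, InMAX n n g → IsCPWL g := by
  have hF : f = maxAffine
      (witnessPieces ⟨n - 3, by omega⟩ ⟨n - 2, by omega⟩ ⟨n - 1, by omega⟩) := by
    refine funext fun x => (hf x).trans (maxAffine_witnessPieces_apply (fun i => ?_) x).symm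
    simp only [ne_eq, Fin.ext_iff, mem_filter, mem_univ, true_and]
    omega
  refine ⟨fun h => ?_, ?_, fun g hg => ?_⟩
  · refine maxAffine_witnessPieces_not_mem ?_ ?_ hn (hF ▸ h.mem_maxAffineSpan (by omega)) <;>
      simp only [ne_eq, Fin.ext_iff] <;> omega
  · rw [hF]
    exact isCPWL_of_mem_maxAffineSpan (maxAffine_mem_maxAffineSpan (by simp [witnessPieces]) le_rfl)
  · exact isCPWL_of_mem_maxAffineSpan (hg.mem_maxAffineSpan (by omega))
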